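/- arXiv:2307.06069 — 7 statements merged into one kernel-verified Lean document; each statement's English description precedes it below -/
import Mathlib

section
/- Let a_1, ..., a_n be nonzero integers such that for each i there are coprime positive integers p_i, q_i with p_i/q_i = [a_i; a_{i+1}, ..., a_n]. Then q_j = p_{j+1} for all 1 ≤ j < n, and consequently p_1 = ∏_{j=1}^n [a_j; a_{j+1}, ..., a_n]. -/
/- Generalized continued fraction [a_1; a_2, ..., a_n] defined by
   [a_n] = a_n and [a_j; a_{j+1},...,a_n] = a_j - 1/[a_{j+1};...,a_n],
   as a rational number. -/
def contFrac : List ℤ → ℚ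
  | [] => 1
  | [a] => (a : ℚ)
  | a :: b :: l => (a : ℚ) - 1 / contFrac (b :: l)

lemma contFrac_cons (x : ℤ) (l : List ℤ) (hl : l ≠ []) :
    contFrac (x :: l) = (x : ℚ) - 1 / contFrac l := by
  cases l with
  | nil => exact absurd rfl hl
  | cons b t => rfl

lemma rat_div_eq (p q r s : ℤ) (hq : 0 < q) (hs : 0 < s)
    (hpq : IsCoprime p q) (hrs : IsCoprime r s)
    (h : (p:ℚ)/q = (r:ℚ)/s) : p = r ∧ q = s := by
  have hq0 : (q:ℚ) ≠ 0 := by exact_mod_cast hq.ne'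
  have hs0 : (s:ℚ) ≠ 0 := by exact_mod_cast hs.ne'
  rw [div_eq_div_iff hq0 hs0] at h
  have h' : p * s = r * q := by exact_mod_cast h
  have h1 : q ∣ s := (hpq.symm).dvd_of_dvd_mul_right ⟨r, by linarith⟩
  have h2 : s ∣ q := (hrs.symm).dvd_of_dvd_mul_right ⟨p, by linarith⟩
  have hqs : q = s := Int.dvd_antisymm hq.le hs.le h1 h2
  subst hqs
  exact ⟨mul_right_cancel₀ hs.ne' h', rfl⟩

lemma telescope (F : ℕ → ℚ) : ∀ n : ℕ, (∀ k, k ≤ n → F k ≠ 0) →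
    ∏ i ∈ Finset.range n, F i / F (i+1) = F 0 / F n := by
  intro n
  induction n with
  | zero => intro h; rw [Finset.prod_range_zero, eq_comm, div_self (h 0 le_rfl)]
  | succ m ih =>
    intro hF
    rw [Finset.prod_range_succ, ih (fun k hk => hF k (hk.trans m.le_succ))]
    have h1 : F m ≠ 0 := hF m m.le_succ
    field_simp

/-- if each [a_i; a_{i+1},...,a_n] equals p_i/q_i with p_i, q_i
coprime positive integers, then q_j = p_{j+1} for 1 ≤ j < n, and consequently
p_1 = ∏_{j=1}^n [a_j; a_{j+1},...,a_n]. -/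
theorem contFrac_numerators {n : ℕ} (hn : 0 < n) (a p q : Fin n → ℤ)
    (ha : ∀ i, a i ≠ 0)
    (hp : ∀ i, 0 < p i) (hq : ∀ i, 0 < q i)
    (hcop : ∀ i, IsCoprime (p i) (q i))
    (hfrac : ∀ i : Fin n, (p i : ℚ) / (q i : ℚ) = contFrac ((List.ofFn a).drop i)) :
    (∀ (j : Fin n) (h : (j : ℕ) + 1 < n), q j = p ⟨(j : ℕ) + 1, h⟩) ∧
      (p ⟨0, hn⟩ : ℚ) = ∏ j : Fin n, contFrac ((List.ofFn a).drop j) := by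
  -- basic facts
  have hlen : (List.ofFn a).length = n := List.length_ofFn
  have dropcons : ∀ (k : ℕ) (h : k < n),
      (List.ofFn a).drop k = a ⟨k, h⟩ :: (List.ofFn a).drop (k+1) := by
    intro k h
    rw [List.drop_eq_getElem_cons (by rw [hlen]; exact h)]
    congr 1
    simp
  -- step relation
  have step : ∀ (j : Fin n) (h : (j:ℕ) + 1 < n),
      contFrac ((List.ofFn a).drop j) =
        (a j : ℚ) - 1 / contFrac ((List.ofFn a).drop ((j:ℕ)+1)) := by
    intro j h
    have hne : (List.ofFn a).drop ((j:ℕ)+1) ≠ [] := by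
      rw [dropcons _ h]; exact List.cons_ne_nil _ _
    rw [dropcons j j.isLt, contFrac_cons _ _ hne]
  -- the q j = p (j+1) statement
  have qp : ∀ (j : Fin n) (h : (j:ℕ) + 1 < n), q j = p ⟨(j:ℕ)+1, h⟩ := by
    intro j h
    set j' : Fin n := ⟨(j:ℕ)+1, h⟩ with hj'
    have hp' : (0:ℚ) < (p j' : ℚ) := by exact_mod_cast hp j'
    have hq' : (0:ℚ) < (q j' : ℚ) := by exact_mod_cast hq j'
    have hfj' : (p j' : ℚ) / (q j' : ℚ) = contFrac ((List.ofFn a).drop ((j:ℕ)+1)) := hfrac j'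
    have e : (p j : ℚ) / (q j : ℚ)
        = ((a j * p j' - q j' : ℤ) : ℚ) / ((p j' : ℤ) : ℚ) := by
      rw [hfrac j, step j h, ← hfj']
      push_cast
      field_simp
    have hcop2 : IsCoprime (a j * p j' - q j') (p j') := by
      have := IsCoprime.add_mul_right_left ((hcop j').symm.neg_left) (a j)
      have hre : a j * p j' - q j' = -(q j') + a j * p j' := by ring
      rw [hre]; exact this
    have hpos2 : 0 < a j * p j' - q j' := by
      have h0 : (0:ℚ) < ((a j * p j' - q j' : ℤ) : ℚ) := by
        have := e ▸ (div_pos (by exact_mod_cast hp j) (by exact_mod_cast hq j))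
        exact (div_pos_iff.mp this).resolve_right (fun ⟨_, hc⟩ => absurd hp' (not_lt.mpr hc.le)) |>.1
      exact_mod_cast h0
    exact (rat_div_eq (p j) (q j) _ (p j') (hq j) (hp j') (hcop j) hcop2 e).2
  -- q at the last index is 1
  have qlast : ∀ (j : Fin n), (j:ℕ) + 1 = n → q j = 1 := by
    intro j hj
    have hdrop : (List.ofFn a).drop (j:ℕ) = [a j] := by
      rw [dropcons j j.isLt, hj]
      have hnil : (List.ofFn a).drop n = [] := by
        apply List.drop_eq_nil_of_le
        rw [hlen]
      rw [hnil]
    have e : (p j : ℚ) / (q j : ℚ) = ((a j : ℤ) : ℚ) / ((1 : ℤ) : ℚ) := by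
      rw [hfrac j, hdrop]
      norm_num
      rfl
    have hapos : 0 < a j := by
      have h0 : (0:ℚ) < ((a j : ℤ) : ℚ) := by
        have := e ▸ (div_pos (by exact_mod_cast hp j) (by exact_mod_cast hq j))
        simpa using this
      exact_mod_cast h0
    exact (rat_div_eq (p j) (q j) (a j) 1 (hq j) one_pos (hcop j) (isCoprime_one_right) e).2
  refine ⟨qp, ?_⟩
  -- product part
  set F : ℕ → ℚ := fun k => if h : k < n then (p ⟨k, h⟩ : ℚ) else 1 with hF
  have hFne : ∀ k, k ≤ n → F k ≠ 0 := by
    intro k _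
    by_cases h : k < n
    · simp only [hF, dif_pos h]
      exact_mod_cast (hp ⟨k, h⟩).ne'
    · simp [hF, dif_neg h]
  have hterm : ∀ j : Fin n, contFrac ((List.ofFn a).drop j) = F j / F ((j:ℕ)+1) := by
    intro j
    rw [← hfrac j]
    have hFj : F (j:ℕ) = (p j : ℚ) := by simp [hF, j.isLt]
    have hFj1 : F ((j:ℕ)+1) = (q j : ℚ) := by
      by_cases h : (j:ℕ)+1 < n
      · simp only [hF, dif_pos h]
        exact_mod_cast (qp j h).symm
      · have hjn : (j:ℕ)+1 = n := le_antisymm j.isLt (not_lt.mp h)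
        simp only [hF, dif_neg h]
        rw [qlast j hjn]
        norm_num
    rw [hFj, hFj1]
  calc (p ⟨0, hn⟩ : ℚ) = F 0 / F n := by
        have : F 0 = (p ⟨0, hn⟩ : ℚ) := by simp [hF, hn]
        have hFn : F n = 1 := by simp [hF]
        rw [this, hFn, div_one]
    _ = ∏ i ∈ Finset.range n, F i / F (i+1) := (telescope F n hFne).symm
    _ = ∏ j : Fin n, contFrac ((List.ofFn a).drop j) := by
        rw [Fin.prod_univ_eq_prod_range (fun i => contFrac ((List.ofFn a).drop i)) n]
        apply Finset.prod_congr rfl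
        intro i hi
        rw [Finset.mem_range] at hi
        exact (hterm ⟨i, hi⟩).symm
end

section
/- Let C be a finite tensor category over an algebraically closed field. Then the tensor ideal of projective objects Proj(C) is generated by any nonzero projective object P, i.e. every projective object is a retract of P ⊗ X for some object X of C. -/
open CategoryTheory CategoryTheory.Limits MonoidalCategory

universe v u

/-- in a finite tensor category `C` over an algebraically closed field `k`
(a finite linear abelian rigid monoidal category with bilinear tensor product and
simple tensor unit), the tensor ideal of projective objects is generated by any
nonzero projective object `P`: every projective object `Q` is a retract of `P ⊗ X`
for some object `X` of `C`. -/
theorem proj_ideal_generated_by_any_nonzero_projective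
    (k : Type u) [Field k] [IsAlgClosed k]
    (C : Type u) [Category.{v} C] [Abelian C] [Linear k C]
    [MonoidalCategory C] [MonoidalPreadditive C] [MonoidalLinear k C]
    [RigidCategory C] [Simple (𝟙_ C)]
    [EnoughProjectives C] [∀ X Y : C, FiniteDimensional k (X ⟶ Y)]
    (P : C) (hP : Projective P) (hP0 : ¬ IsZero P) :
    ∀ Q : C, Projective Q →
      ∃ (X : C) (i : Q ⟶ P ⊗ X) (r : P ⊗ X ⟶ Q), i ≫ r = 𝟙 Q := by
  intro Q hQ
  -- the evaluation morphism `ε : P ⊗ ᘁP ⟶ 𝟙` is nonzero, since the zig-zag identity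
  -- shows that if it were zero, then `𝟙 P = 0`, so `P` would be zero.
  have hε : (ε_ ((ᘁP : C)) P) ≠ 0 := by
    intro h
    apply hP0
    rw [IsZero.iff_id_eq_zero]
    have zz := ExactPairing.coevaluation_evaluation ((ᘁP : C)) P
    rw [h] at zz
    simp only [MonoidalPreadditive.zero_whiskerRight, comp_zero] at zz
    have : 𝟙 P = (ρ_ P).inv ≫ ((ρ_ P).hom ≫ (λ_ P).inv) ≫ (λ_ P).hom := by simp
    rw [this, ← zz, zero_comp, comp_zero]
  -- a nonzero morphism to the simple object `𝟙_ C` is an epimorphism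
  haveI hεepi : Epi (ε_ ((ᘁP : C)) P) := epi_of_nonzero_to_simple hε
  -- tensoring on the right with `Q` preserves epimorphisms, as `tensorRight Q`
  -- is a left adjoint (rigidity)
  haveI : (tensorRight Q).PreservesEpimorphisms :=
    Functor.preservesEpimorphisms_of_adjunction (tensorRightAdjunction Q (Qᘁ))
  haveI : Epi ((ε_ ((ᘁP : C)) P) ▷ Q) := by
    have : (ε_ ((ᘁP : C)) P) ▷ Q = (tensorRight Q).map (ε_ ((ᘁP : C)) P) := rfl
    rw [this]
    exact Functor.map_epi _ _
  -- the epimorphism `P ⊗ ((ᘁP : C) ⊗ Q) ⟶ Q`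
  set r : P ⊗ ((ᘁP : C) ⊗ Q) ⟶ Q :=
    (α_ P ((ᘁP : C)) Q).inv ≫ ((ε_ ((ᘁP : C)) P) ▷ Q) ≫ (λ_ Q).hom with hr
  haveI : Epi r := by
    rw [hr]
    apply epi_comp
  -- since `Q` is projective, `𝟙 Q` lifts through `r`
  refine ⟨(ᘁP : C) ⊗ Q, Projective.factorThru (𝟙 Q) r, r, ?_⟩
  exact Projective.factorThru_comp _ _
end

section
/- Let C be a finite tensor category. If I is a nonzero right or left tensor ideal of C, then every projective object of C belongs to I; that is, Proj(C) is the smallest nonzero tensor ideal of C. -/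
open CategoryTheory CategoryTheory.Limits MonoidalCategory

universe v u

/-- A right tensor ideal of a monoidal category: a full subcategory (given by a
predicate on objects) closed under tensoring on the right by arbitrary objects
and under retracts. -/
structure RightTensorIdeal (C : Type u) [Category.{v} C] [MonoidalCategory C] where
  mem : C → Prop
  tensor_mem : ∀ {X : C}, mem X → ∀ V : C, mem (X ⊗ V)
  retract_mem : ∀ {X Y : C}, mem Y → ∀ (i : X ⟶ Y) (r : Y ⟶ X), i ≫ r = 𝟙 X → mem X

/-- A left tensor ideal: closed under tensoring on the left and under retracts. -/
structure LeftTensorIdeal (C : Type u) [Category.{v} C] [MonoidalCategory C] where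
  mem : C → Prop
  tensor_mem : ∀ {X : C}, mem X → ∀ V : C, mem (V ⊗ X)
  retract_mem : ∀ {X Y : C}, mem Y → ∀ (i : X ⟶ Y) (r : Y ⟶ X), i ≫ r = 𝟙 X → mem X

section Aux

variable {C : Type u} [Category.{v} C] [Abelian C]
  [MonoidalCategory C] [MonoidalPreadditive C] [Simple (𝟙_ C)]

/-- If the second object of an exact pairing is nonzero, the evaluation map is epi. -/
lemma epi_evaluation_of_nonzero_snd (A B : C) [ExactPairing A B] (h : ¬ IsZero B) :
    Epi (ExactPairing.evaluation A B) := by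
  apply epi_of_nonzero_to_simple (w := ?_)
  intro hz
  apply h
  rw [IsZero.iff_id_eq_zero]
  have := ExactPairing.coevaluation_evaluation A B
  rw [hz] at this
  simp only [MonoidalPreadditive.zero_whiskerRight, Limits.comp_zero] at this
  have h2 : ((ρ_ B).hom ≫ (λ_ B).inv) ≫ ((λ_ B).hom ≫ (ρ_ B).inv) = 0 := by
    rw [← this]; simp
  have hz2 : IsZero (B ⊗ 𝟙_ C) := by
    rw [IsZero.iff_id_eq_zero]; simpa using h2
  have := hz2.of_iso (ρ_ B).symm
  rw [IsZero.iff_id_eq_zero] at this; exact this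

/-- If the first object of an exact pairing is nonzero, the evaluation map is epi. -/
lemma epi_evaluation_of_nonzero_fst (A B : C) [ExactPairing A B] (h : ¬ IsZero A) :
    Epi (ExactPairing.evaluation A B) := by
  apply epi_of_nonzero_to_simple (w := ?_)
  intro hz
  apply h
  rw [IsZero.iff_id_eq_zero]
  have := ExactPairing.evaluation_coevaluation A B
  rw [hz] at this
  simp only [MonoidalPreadditive.whiskerLeft_zero, Limits.comp_zero] at this
  have h2 : ((λ_ A).hom ≫ (ρ_ A).inv) ≫ ((ρ_ A).hom ≫ (λ_ A).inv) = 0 := by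
    rw [← this]; simp
  have hz2 : IsZero (𝟙_ C ⊗ A) := by
    rw [IsZero.iff_id_eq_zero]; simpa using h2
  have := hz2.of_iso (λ_ A).symm
  rw [IsZero.iff_id_eq_zero] at this; exact this

end Aux

/-- in a finite tensor category `C`, every nonzero right or left
tensor ideal contains all projective objects; i.e. Proj(C) is the smallest
nonzero tensor ideal of `C`. -/
theorem proj_smallest_ideal
    (k : Type u) [Field k] [IsAlgClosed k]
    (C : Type u) [Category.{v} C] [Abelian C] [Linear k C]
    [MonoidalCategory C] [MonoidalPreadditive C] [MonoidalLinear k C]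
    [RigidCategory C] [Simple (𝟙_ C)]
    [EnoughProjectives C] [∀ X Y : C, FiniteDimensional k (X ⟶ Y)] :
    (∀ I : RightTensorIdeal C, (∃ X : C, I.mem X ∧ ¬ IsZero X) →
        ∀ P : C, Projective P → I.mem P) ∧
      (∀ I : LeftTensorIdeal C, (∃ X : C, I.mem X ∧ ¬ IsZero X) →
        ∀ P : C, Projective P → I.mem P) := by
  constructor
  · rintro I ⟨X, hX, hX0⟩ P hP
    haveI := hP
    -- evaluation of the left dual: X ⊗ (HasLeftDual.leftDual X) ⟶ 𝟙
    haveI : Epi (ExactPairing.evaluation ((HasLeftDual.leftDual X)) X) :=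
      epi_evaluation_of_nonzero_snd _ _ hX0
    -- epi X ⊗ ((HasLeftDual.leftDual X) ⊗ P) ⟶ P
    set e : X ⊗ ((HasLeftDual.leftDual X) ⊗ P) ⟶ P :=
      (α_ X ((HasLeftDual.leftDual X)) P).inv ≫ (ExactPairing.evaluation ((HasLeftDual.leftDual X)) X) ▷ P ≫ (λ_ P).hom with he
    haveI : Epi ((ExactPairing.evaluation ((HasLeftDual.leftDual X)) X) ▷ P) := by
      haveI := (Functor.preservesEpimorphisms_of_adjunction (tensorRightAdjunction P (HasRightDual.rightDual P)))
      simpa using (tensorRight P).map_epi (ExactPairing.evaluation ((HasLeftDual.leftDual X)) X)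
    haveI : Epi e := by rw [he]; apply epi_comp
    exact I.retract_mem (I.tensor_mem hX ((HasLeftDual.leftDual X) ⊗ P))
      (Projective.factorThru (𝟙 P) e) e (Projective.factorThru_comp _ _)
  · rintro I ⟨X, hX, hX0⟩ P hP
    haveI := hP
    -- evaluation of the right dual: HasRightDual.rightDual X ⊗ X ⟶ 𝟙
    haveI : Epi (ExactPairing.evaluation X (HasRightDual.rightDual X)) :=
      epi_evaluation_of_nonzero_fst _ _ hX0
    set e : (P ⊗ HasRightDual.rightDual X) ⊗ X ⟶ P :=
      (α_ P (HasRightDual.rightDual X) X).hom ≫ P ◁ (ExactPairing.evaluation X (HasRightDual.rightDual X)) ≫ (ρ_ P).hom with he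
    haveI : Epi (P ◁ (ExactPairing.evaluation X (HasRightDual.rightDual X))) := by
      haveI := (Functor.preservesEpimorphisms_of_adjunction (tensorLeftAdjunction (HasLeftDual.leftDual P) P))
      simpa using (tensorLeft P).map_epi (ExactPairing.evaluation X (HasRightDual.rightDual X))
    haveI : Epi e := by rw [he]; apply epi_comp
    exact I.retract_mem (I.tensor_mem hX (P ⊗ HasRightDual.rightDual X))
      (Projective.factorThru (𝟙 P) e) e (Projective.factorThru_comp _ _)
end

section
/- A finite tensor category C admits a nonzero proper tensor ideal if and only if C is not semisimple. -/
open CategoryTheory CategoryTheory.Limits MonoidalCategory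

universe v u

/-- A (two-sided) tensor ideal of a monoidal category: a full subcategory (given
by a predicate on objects) closed under tensoring on both sides by arbitrary
objects and under retracts. -/
structure TensorIdeal (C : Type u) [Category.{v} C] [MonoidalCategory C] where
  mem : C → Prop
  tensor_mem_right : ∀ {X : C}, mem X → ∀ V : C, mem (X ⊗ V)
  tensor_mem_left : ∀ {X : C}, mem X → ∀ V : C, mem (V ⊗ X)
  retract_mem : ∀ {X Y : C}, mem Y → ∀ (i : X ⟶ Y) (r : Y ⟶ X), i ≫ r = 𝟙 X → mem X

section Aux

variable {C : Type u} [Category.{v} C]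

/-- Tensoring a projective object on the right by any object is projective. -/
lemma projective_tensor_right [MonoidalCategory C] [RigidCategory C]
    {X : C} (hX : Projective X) (V : C) : Projective (X ⊗ V) := by
  haveI : (tensorRight (Vᘁ)).IsLeftAdjoint := ⟨_, ⟨tensorRightAdjunction (Vᘁ) ((Vᘁ)ᘁ)⟩⟩
  exact (tensorRightAdjunction V (Vᘁ)).map_projective X hX

/-- Tensoring a projective object on the left by any object is projective. -/
lemma projective_tensor_left [MonoidalCategory C] [RigidCategory C]
    {X : C} (hX : Projective X) (V : C) : Projective (V ⊗ X) := by
  haveI : (tensorLeft (ᘁV)).IsLeftAdjoint := ⟨_, ⟨tensorLeftAdjunction (ᘁ(ᘁV)) (ᘁV)⟩⟩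
  exact (tensorLeftAdjunction (ᘁV) V).map_projective X hX

/-- A retract of a projective object is projective. -/
lemma projective_of_retract {X Y : C} (hY : Projective Y)
    (i : X ⟶ Y) (r : Y ⟶ X) (hir : i ≫ r = 𝟙 X) : Projective X where
  factors {E Z} f e he := by
    obtain ⟨g, hg⟩ := hY.factors (r ≫ f) e
    exact ⟨i ≫ g, by rw [Category.assoc, hg, ← Category.assoc, hir, Category.id_comp]⟩

/-- If every object is projective, every monomorphism splits. -/
lemma splits_of_all_projective [Abelian C] (hproj : ∀ X : C, Projective X)
    {A B : C} (f : A ⟶ B) [Mono f] : ∃ g : B ⟶ A, f ≫ g = 𝟙 A := by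
  haveI := hproj (cokernel f)
  obtain ⟨σ, hσ⟩ := Projective.factors (𝟙 (cokernel f)) (cokernel.π f)
  have hr0 : (𝟙 B - cokernel.π f ≫ σ) ≫ cokernel.π f = 0 := by
    simp [Preadditive.sub_comp, Category.assoc, hσ]
  refine ⟨Abelian.monoLift f _ hr0, ?_⟩
  have := Abelian.monoLift_comp f _ hr0
  rw [← cancel_mono f, Category.assoc, this]
  simp [Preadditive.comp_sub]

end Aux

/-- a finite tensor category `C` admits a nonzero proper tensor
ideal if and only if `C` is not semisimple.  (A finite tensor category is
semisimple iff every object is projective, iff the unit object is projective.) -/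
theorem exists_proper_ideal_iff_not_semisimple
    (k : Type u) [Field k] [IsAlgClosed k]
    (C : Type u) [Category.{v} C] [Abelian C] [Linear k C]
    [MonoidalCategory C] [MonoidalPreadditive C] [MonoidalLinear k C]
    [RigidCategory C] [Simple (𝟙_ C)]
    [EnoughProjectives C] [∀ X Y : C, FiniteDimensional k (X ⟶ Y)] :
    (∃ I : TensorIdeal C, (∃ X : C, I.mem X ∧ ¬ IsZero X) ∧ (∃ Y : C, ¬ I.mem Y))
      ↔ ¬ (∀ X : C, Projective X) := by
  constructor
  · rintro ⟨I, ⟨X, hX, hXnz⟩, ⟨Y, hY⟩⟩ hproj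
    apply hY
    -- the coevaluation of `X` is nonzero
    have hη : (η_ X (Xᘁ)) ≠ 0 := by
      intro h
      apply hXnz
      rw [IsZero.iff_id_eq_zero]
      have h2 := ExactPairing.evaluation_coevaluation X (Xᘁ)
      rw [h] at h2
      simp only [MonoidalPreadditive.zero_whiskerRight, Limits.zero_comp] at h2
      calc 𝟙 X = (λ_ X).inv ≫ ((λ_ X).hom ≫ (ρ_ X).inv) ≫ (ρ_ X).hom := by simp
        _ = 0 := by rw [← h2]; simp
    haveI : Mono (η_ X (Xᘁ)) := mono_of_nonzero_from_simple hη
    obtain ⟨g, hg⟩ := splits_of_all_projective hproj (η_ X (Xᘁ))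
    have hmem1 : I.mem (𝟙_ C) :=
      I.retract_mem (I.tensor_mem_right hX (Xᘁ)) (η_ X (Xᘁ)) g hg
    exact I.retract_mem (I.tensor_mem_left hmem1 Y) (ρ_ Y).inv (ρ_ Y).hom (by simp)
  · intro h
    push_neg at h
    obtain ⟨Y, hY⟩ := h
    refine ⟨⟨fun X => Projective X,
        fun hX V => projective_tensor_right hX V,
        fun hX V => projective_tensor_left hX V,
        fun hZ i r hir => projective_of_retract hZ i r hir⟩,
      ⟨Projective.over (𝟙_ C), Projective.projective_over _, ?_⟩, ⟨Y, hY⟩⟩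
    intro hz
    have hπ : Projective.π (𝟙_ C) = 0 := hz.eq_zero_of_src _
    have : 𝟙 (𝟙_ C) = 0 := by
      rw [← cancel_epi (Projective.π (𝟙_ C))]
      simp [hπ]
    exact id_nonzero (𝟙_ C) this
end

section
/- Let C be a pivotal finite tensor category. The categorical trace tr is non-degenerate (i.e. all induced pairings C(X,V) × C(V,X) → k, (f,g) ↦ tr_X(g∘f), are non-degenerate) if and only if C is semisimple. -/
open CategoryTheory CategoryTheory.Limits MonoidalCategory

universe v u

variable (C : Type u) [Category.{v} C] [MonoidalCategory C] [RightRigidCategory C]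

/-- A pivotal structure, presented as the induced right duality data. -/
structure PivotalData where
  evR : ∀ X : C, X ⊗ Xᘁ ⟶ 𝟙_ C
  coevR : ∀ X : C, 𝟙_ C ⟶ Xᘁ ⊗ X
  zig : ∀ X : C,
    (ρ_ X).inv ≫ (X ◁ coevR X) ≫ (α_ X (Xᘁ) X).inv ≫ (evR X ▷ X) ≫ (λ_ X).hom = 𝟙 X
  zag : ∀ X : C,
    (λ_ (Xᘁ)).inv ≫ (coevR X ▷ (Xᘁ)) ≫ (α_ (Xᘁ) X (Xᘁ)).hom ≫ ((Xᘁ) ◁ evR X) ≫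
      (ρ_ (Xᘁ)).hom = 𝟙 (Xᘁ)
  evR_natural : ∀ {X Y : C} (f : X ⟶ Y), (f ▷ (Yᘁ)) ≫ evR Y = (X ◁ fᘁ) ≫ evR X

variable {C}

/-- The right categorical trace, valued in End(𝟙). -/
def catTrace (P : PivotalData C) (X : C) (f : X ⟶ X) : 𝟙_ C ⟶ 𝟙_ C :=
  η_ X (Xᘁ) ≫ (f ▷ (Xᘁ)) ≫ P.evR X

/-! ### Auxiliary material -/

/-- The exact pairing `(Xᘁ, X)` induced by pivotal data. -/
def PivotalData.pairing (P : PivotalData C) (X : C) : ExactPairing (Xᘁ) X where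
  coevaluation' := P.coevR X
  evaluation' := P.evR X
  coevaluation_evaluation' := by
    have h := P.zig X
    rw [← cancel_epi (ρ_ X).inv, ← cancel_mono (λ_ X).hom]
    simpa [Category.assoc] using h
  evaluation_coevaluation' := by
    have h := P.zag X
    rw [← cancel_epi (λ_ (Xᘁ)).inv, ← cancel_mono (ρ_ (Xᘁ)).hom]
    simpa [Category.assoc] using h

/-- The trace of `f ≫ g` decomposes as a composite `𝟙 ⟶ V ⊗ Xᘁ ⟶ 𝟙`. -/
lemma catTrace_comp_eq (P : PivotalData C) {X V : C} (f : X ⟶ V) (g : V ⟶ X) :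
    catTrace P X (f ≫ g) = (η_ X (Xᘁ) ≫ f ▷ (Xᘁ)) ≫ ((g ▷ (Xᘁ)) ≫ P.evR X) := by
  simp [catTrace, comp_whiskerRight, Category.assoc]

/-- Expressing the map `g ↦ (g ▷ Xᘁ) ≫ evR X` via the hom-equivalence coming
from the pivotal pairing; in particular it is a bijection. -/
lemma PivotalData.whiskerRight_comp_evR (P : PivotalData C) {X V : C} (g : V ⟶ X) :
    (@tensorRightHomEquiv C _ _ V (Xᘁ) X (𝟙_ C) (P.pairing X)).symm (g ≫ (λ_ X).inv)
      = (g ▷ (Xᘁ)) ≫ P.evR X := by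
  dsimp [tensorRightHomEquiv, ExactPairing.evaluation, PivotalData.pairing]
  simp [unitors_inv_equal]
  rfl

section Preadditive

variable [Preadditive C]

lemma catTrace_zero (P : PivotalData C) (X : C) [MonoidalPreadditive C] :
    catTrace P X 0 = 0 := by
  simp [catTrace]

end Preadditive

/-- In an abelian category in which every object is projective, every
monomorphism splits. -/
lemma exists_retraction_of_projective {C : Type u} [Category.{v} C] [Abelian C]
    (hP : ∀ Z : C, Projective Z) {A B : C} (a : A ⟶ B) [Mono a] :
    ∃ r : B ⟶ A, a ≫ r = 𝟙 A := by
  haveI := hP (cokernel a)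
  set s : cokernel a ⟶ B := Projective.factorThru (𝟙 (cokernel a)) (cokernel.π a) with hs_def
  have hs : s ≫ cokernel.π a = 𝟙 _ := Projective.factorThru_comp _ _
  have hq : (𝟙 B - cokernel.π a ≫ s) ≫ cokernel.π a = 0 := by
    simp [Preadditive.sub_comp, Category.assoc, hs]
  refine ⟨Abelian.monoLift a _ hq, ?_⟩
  have h := Abelian.monoLift_comp a _ hq
  rw [← cancel_mono a]
  rw [Category.assoc, h]
  simp [Preadditive.comp_sub, cokernel.condition_assoc]

/-- in a pivotal finite tensor category `C` over an algebraically
closed field, the categorical trace is non-degenerate (all induced pairings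
`C(X,V) × C(V,X) → k`, `(f,g) ↦ tr_X(f ≫ g)`, are non-degenerate) if and only if
`C` is semisimple (equivalently, every object of `C` is projective). -/
theorem catTrace_nondegenerate_iff_semisimple
    (k : Type u) [Field k] [IsAlgClosed k]
    {C : Type u} [Category.{v} C] [Abelian C] [Linear k C]
    [MonoidalCategory C] [MonoidalPreadditive C] [MonoidalLinear k C]
    [RigidCategory C] [Simple (𝟙_ C)]
    [EnoughProjectives C] [∀ X Y : C, FiniteDimensional k (X ⟶ Y)]
    (P : PivotalData C) :
    (∀ X V : C,
        (∀ f : X ⟶ V, f ≠ 0 → ∃ g : V ⟶ X, catTrace P X (f ≫ g) ≠ 0) ∧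
        (∀ g : V ⟶ X, g ≠ 0 → ∃ f : X ⟶ V, catTrace P X (f ≫ g) ≠ 0))
      ↔ (∀ X : C, Projective X) := by
  constructor
  · -- nondegenerate ⇒ all objects projective
    intro hnd
    -- Step 1: the unit is projective.
    have h1 : Projective (𝟙_ C) := by
      have hπ : Projective.π (𝟙_ C) ≠ 0 := by
        intro h
        apply id_nonzero (𝟙_ C)
        rw [← cancel_epi (Projective.π (𝟙_ C)), h]
        simp
      obtain ⟨f, hf⟩ := (hnd (𝟙_ C) (Projective.over (𝟙_ C))).2 (Projective.π _) hπ
      have hfπ : f ≫ Projective.π (𝟙_ C) ≠ 0 := by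
        intro h
        apply hf
        rw [h, catTrace_zero]
      haveI : IsIso (f ≫ Projective.π (𝟙_ C)) := isIso_of_hom_simple hfπ
      constructor
      intro E Z h e he
      refine ⟨(inv (f ≫ Projective.π (𝟙_ C)) ≫ f) ≫
        Projective.factorThru (Projective.π (𝟙_ C) ≫ h) e, ?_⟩
      rw [Category.assoc, Projective.factorThru_comp, Category.assoc, IsIso.inv_comp_eq,
        ← Category.assoc]
    -- Step 2: transport projectivity of the unit to any object.
    intro X
    constructor
    intro E Z h e he
    haveI : (tensorRight (Xᘁ)).IsLeftAdjoint := ⟨_, ⟨tensorRightAdjunction (Xᘁ) ((Xᘁ)ᘁ)⟩⟩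
    haveI hepi : Epi (e ▷ (Xᘁ)) := by
      have : Epi ((tensorRight (Xᘁ)).map e) := inferInstance
      simpa using this
    set h' : 𝟙_ C ⟶ Z ⊗ (Xᘁ) := η_ X (Xᘁ) ≫ h ▷ (Xᘁ) with hh'
    set l' : 𝟙_ C ⟶ E ⊗ (Xᘁ) := Projective.factorThru h' (e ▷ (Xᘁ)) with hl'
    set f : X ⟶ E := (λ_ X).inv ≫ (tensorRightHomEquiv (𝟙_ C) X (Xᘁ) E).symm l' with hfdef
    refine ⟨f, ?_⟩
    have hfl : η_ X (Xᘁ) ≫ f ▷ (Xᘁ) = l' := by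
      apply (tensorRightHomEquiv (𝟙_ C) X (Xᘁ) E).symm.injective
      rw [tensorRightHomEquiv_symm_coevaluation_comp_whiskerRight (Y := X) (Y' := Xᘁ) f]
      simp [hfdef]
    have key : (λ_ X).hom ≫ f ≫ e = (λ_ X).hom ≫ h := by
      rw [← tensorRightHomEquiv_symm_coevaluation_comp_whiskerRight (Y := X) (Y' := Xᘁ) (f ≫ e),
        ← tensorRightHomEquiv_symm_coevaluation_comp_whiskerRight (Y := X) (Y' := Xᘁ) h]
      congr 1
      rw [comp_whiskerRight, ← Category.assoc, hfl, hl', Projective.factorThru_comp]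
    exact (cancel_epi (λ_ X).hom).1 key
  · -- all objects projective ⇒ nondegenerate
    intro hP X V
    constructor
    · intro f hf
      set a : 𝟙_ C ⟶ V ⊗ (Xᘁ) := η_ X (Xᘁ) ≫ f ▷ (Xᘁ) with ha
      have ha0 : a ≠ 0 := by
        intro h0
        apply hf
        have h1 := tensorRightHomEquiv_symm_coevaluation_comp_whiskerRight (Y := X) (Y' := Xᘁ) f
        rw [← ha, h0] at h1
        have h2 : (tensorRightHomEquiv (𝟙_ C) X (Xᘁ) V).symm 0 = 0 := by
          simp [tensorRightHomEquiv]
        rw [h2] at h1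
        rw [← cancel_epi (λ_ X).hom, ← h1]
        simp
      haveI : Mono a := mono_of_nonzero_from_simple ha0
      obtain ⟨r, hr⟩ := exists_retraction_of_projective hP a
      refine ⟨(@tensorRightHomEquiv C _ _ V (Xᘁ) X (𝟙_ C) (P.pairing X)) r ≫ (λ_ X).hom, ?_⟩
      rw [catTrace_comp_eq]
      have hg : (((@tensorRightHomEquiv C _ _ V (Xᘁ) X (𝟙_ C) (P.pairing X)) r ≫ (λ_ X).hom)
          ▷ (Xᘁ)) ≫ P.evR X = r := by
        rw [← PivotalData.whiskerRight_comp_evR]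
        rw [Category.assoc, Iso.hom_inv_id, Category.comp_id, Equiv.symm_apply_apply]
      rw [hg, ← ha, hr]
      exact id_nonzero _
    · intro g hg
      set b : V ⊗ (Xᘁ) ⟶ 𝟙_ C := (g ▷ (Xᘁ)) ≫ P.evR X with hb
      have hb0 : b ≠ 0 := by
        intro h0
        apply hg
        have h1 := P.whiskerRight_comp_evR (X := X) (V := V) g
        rw [← hb, h0] at h1
        have h2 : (@tensorRightHomEquiv C _ _ V (Xᘁ) X (𝟙_ C) (P.pairing X)).symm 0 = 0 := by
          simp [tensorRightHomEquiv]
        have h3 : g ≫ (λ_ X).inv = 0 :=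
          (@tensorRightHomEquiv C _ _ V (Xᘁ) X (𝟙_ C) (P.pairing X)).symm.injective
            (h1.trans h2.symm)
        have h4 := congrArg (fun m => m ≫ (λ_ X).hom) h3
        simpa using h4
      haveI : Epi b := epi_of_nonzero_to_simple hb0
      haveI := hP (𝟙_ C)
      obtain ⟨s, hs⟩ : ∃ s : 𝟙_ C ⟶ V ⊗ (Xᘁ), s ≫ b = 𝟙 _ :=
        ⟨Projective.factorThru (𝟙 _) b, Projective.factorThru_comp _ _⟩
      refine ⟨(λ_ X).inv ≫ (tensorRightHomEquiv (𝟙_ C) X (Xᘁ) V).symm s, ?_⟩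
      rw [catTrace_comp_eq]
      have hfs : η_ X (Xᘁ) ≫ ((λ_ X).inv ≫ (tensorRightHomEquiv (𝟙_ C) X (Xᘁ) V).symm s)
          ▷ (Xᘁ) = s := by
        apply (tensorRightHomEquiv (𝟙_ C) X (Xᘁ) V).symm.injective
        rw [tensorRightHomEquiv_symm_coevaluation_comp_whiskerRight (Y := X) (Y' := Xᘁ)
          ((λ_ X).inv ≫ (tensorRightHomEquiv (𝟙_ C) X (Xᘁ) V).symm s)]
        simp
      rw [hfs, ← hb, hs]
      exact id_nonzero _
end

section
/- For the symplectic fermion quasi-Hopf algebra Q = Q(N, β), the n-th power of the inverse ribbon element satisfies, for all natural numbers m ≥ 0, v^{±m} = (e_0 + (−β^{±1} i K)^m e_1) · ∏_{j=1}^N (1 ∓ 2(m e_0 ± δ_{m odd} e_1) f_j^+ f_j^-). -/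
open scoped TensorProduct

noncomputable section

/-- Generators of the symplectic fermion quasi-Hopf algebra `Q(N,β)`:
`K` and `f_i^ε` for `1 ≤ i ≤ N`, `ε = ±` (encoded by `Bool`, `true = +`). -/
inductive SFGen (N : ℕ) : Type
  | K : SFGen N
  | f : Fin N → Bool → SFGen N

namespace SF

variable (N : ℕ)

/-- `K` as an element of the free algebra. -/
def gK : FreeAlgebra ℂ (SFGen N) := FreeAlgebra.ι ℂ SFGen.K

/-- `f_i^ε` as an element of the free algebra. -/
def gf (i : Fin N) (ε : Bool) : FreeAlgebra ℂ (SFGen N) := FreeAlgebra.ι ℂ (SFGen.f i ε)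

/-- `e_1 = (1 - K²)/2` in the free algebra. -/
def ge1 : FreeAlgebra ℂ (SFGen N) := ((2 : ℂ)⁻¹) • (1 - gK N ^ 2)

/-- The defining relations of `Q(N,β)` as an algebra:
`{f_i^ε, K} = 0`, `{f_i^ε, f_j^δ} = δ_{ij} δ_{ε≠δ} e_1`, `K⁴ = 1`. -/
inductive SFRel : FreeAlgebra ℂ (SFGen N) → FreeAlgebra ℂ (SFGen N) → Prop
  | anticomm_K : ∀ (i : Fin N) (ε : Bool),
      SFRel (gf N i ε * gK N + gK N * gf N i ε) 0
  | anticomm_f : ∀ (i j : Fin N) (ε δ : Bool),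
      SFRel (gf N i ε * gf N j δ + gf N j δ * gf N i ε)
        (if i = j ∧ ε ≠ δ then ge1 N else 0)
  | K_four : SFRel (gK N ^ 4) 1

/-- The symplectic fermion algebra: the free algebra modulo the relations.
(The parameter β only enters the quasi-Hopf structure, not the algebra.) -/
abbrev QA := RingQuot (SFRel N)

/-- The generator `K` in `Q(N,β)`. -/
def aK : QA N := RingQuot.mkAlgHom ℂ (SFRel N) (gK N)

/-- The generator `f_i^ε` in `Q(N,β)`. -/
def af (i : Fin N) (ε : Bool) : QA N := RingQuot.mkAlgHom ℂ (SFRel N) (gf N i ε)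

/-- The central idempotent `e_0 = (1 + K²)/2`. -/
def ae0 : QA N := ((2 : ℂ)⁻¹) • (1 + aK N ^ 2)

/-- The central idempotent `e_1 = (1 − K²)/2`. -/
def ae1 : QA N := ((2 : ℂ)⁻¹) • (1 - aK N ^ 2)

/-- An ordered (noncommutative) product over `j = 1, …, N`. -/
def fermProd (g : Fin N → QA N) : QA N := ((List.finRange N).map g).prod

/-- The ribbon element `v = (e₀ − β i K e₁) ∏_j (1 − 2(e₀+e₁) f_j⁺ f_j⁻)`. -/
def ribbon (β : ℂ) : QA N :=
  (ae0 N - (β * Complex.I) • (aK N * ae1 N)) *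
    fermProd N (fun j => 1 - (2 : ℂ) • ((ae0 N + ae1 N) * (af N j true * af N j false)))

/-- The inverse ribbon element
`v⁻¹ = (e₀ − β⁻¹ i K e₁) ∏_j (1 + 2(e₀−e₁) f_j⁺ f_j⁻)`. -/
def ribbonInv (β : ℂ) : QA N :=
  (ae0 N - (β⁻¹ * Complex.I) • (aK N * ae1 N)) *
    fermProd N (fun j => 1 + (2 : ℂ) • ((ae0 N - ae1 N) * (af N j true * af N j false)))

/-- `δ_{m odd}` as a complex scalar. -/
def deltaOdd (m : ℕ) : ℂ := if Odd m then 1 else 0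

end SF
namespace SF

variable (N : ℕ)

lemma aK_pow_four : aK N ^ 4 = 1 := by
  have h := RingQuot.mkAlgHom_rel ℂ (SFRel.K_four (N := N))
  simpa [aK, map_pow, map_one] using h

lemma af_aK_anticomm (i : Fin N) (ε : Bool) :
    af N i ε * aK N + aK N * af N i ε = 0 := by
  have h := RingQuot.mkAlgHom_rel ℂ (SFRel.anticomm_K (N := N) i ε)
  simpa [af, aK, map_add, map_mul] using h

lemma aK_mul_af (i : Fin N) (ε : Bool) :
    aK N * af N i ε = -(af N i ε * aK N) :=
  eq_neg_of_add_eq_zero_left (by rw [add_comm]; exact af_aK_anticomm N i ε)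

lemma af_mul_aK (i : Fin N) (ε : Bool) :
    af N i ε * aK N = -(aK N * af N i ε) :=
  eq_neg_of_add_eq_zero_left (af_aK_anticomm N i ε)

lemma af_mul_af (i j : Fin N) (ε δ : Bool) :
    af N i ε * af N j δ + af N j δ * af N i ε
      = if i = j ∧ ε ≠ δ then ae1 N else 0 := by
  have h := RingQuot.mkAlgHom_rel ℂ (SFRel.anticomm_f (N := N) i j ε δ)
  split_ifs at h ⊢ with hc
  · simpa [af, ae1, aK, ge1, map_add, map_mul, map_smul, map_sub, map_pow, map_one] using h
  · simpa [af, map_add, map_mul] using h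

lemma af_sq (i : Fin N) (ε : Bool) : af N i ε * af N i ε = 0 := by
  have h := af_mul_af N i i ε ε
  rw [if_neg (by simp)] at h
  have h2 : (2 : ℂ) • (af N i ε * af N i ε) = 0 := by rw [two_smul]; exact h
  simpa using (smul_eq_zero.mp h2).resolve_left (by norm_num)

lemma af_mul_af_ne {i j : Fin N} {ε δ : Bool} (h : ¬(i = j ∧ ε ≠ δ)) :
    af N j δ * af N i ε = -(af N i ε * af N j δ) := by
  have h' := af_mul_af N i j ε δ
  rw [if_neg h] at h'
  exact eq_neg_of_add_eq_zero_left (by rw [add_comm]; exact h')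

end SF
namespace SF

variable (N : ℕ)

lemma comm_of_anticomm {R : Type*} [Ring R] {a b c : R}
    (h1 : c * a = -(a * c)) (h2 : c * b = -(b * c)) :
    Commute c (a * b) := by
  show c * (a * b) = (a * b) * c
  calc c * (a * b) = (c * a) * b := by rw [mul_assoc]
    _ = -(a * (c * b)) := by rw [h1, neg_mul, mul_assoc]
    _ = a * (b * c) := by rw [h2, mul_neg, neg_neg]
    _ = (a * b) * c := by rw [mul_assoc]

/-- `F_j = f_j⁺ f_j⁻`. -/
def aF (j : Fin N) : QA N := af N j true * af N j false

lemma comm_aK_aF (j : Fin N) : Commute (aK N) (aF N j) :=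
  comm_of_anticomm (aK_mul_af N j true) (aK_mul_af N j false)

lemma comm_af_aF {j k : Fin N} (δ : Bool) (h : j ≠ k) :
    Commute (af N k δ) (aF N j) :=
  comm_of_anticomm (af_mul_af_ne N (fun hc => h hc.1))
    (af_mul_af_ne N (fun hc => h hc.1))

lemma comm_aF_aF {j k : Fin N} (h : j ≠ k) : Commute (aF N j) (aF N k) :=
  ((comm_af_aF N true h).symm).mul_right ((comm_af_aF N false h).symm)

lemma comm_af_aKsq (i : Fin N) (ε : Bool) : Commute (af N i ε) (aK N ^ 2) := by
  rw [sq]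
  exact comm_of_anticomm (af_mul_aK N i ε) (af_mul_aK N i ε)

lemma comm_ae0_af (i : Fin N) (ε : Bool) : Commute (ae0 N) (af N i ε) :=
  (((Commute.one_right _).add_right (comm_af_aKsq N i ε)).symm).smul_left _

lemma comm_ae1_af (i : Fin N) (ε : Bool) : Commute (ae1 N) (af N i ε) :=
  (((Commute.one_right _).sub_right (comm_af_aKsq N i ε)).symm).smul_left _

lemma comm_ae0_aF (j : Fin N) : Commute (ae0 N) (aF N j) :=
  (comm_ae0_af N j true).mul_right (comm_ae0_af N j false)

lemma comm_ae1_aF (j : Fin N) : Commute (ae1 N) (aF N j) :=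
  (comm_ae1_af N j true).mul_right (comm_ae1_af N j false)

lemma comm_ae0_aK : Commute (ae0 N) (aK N) :=
  ((Commute.one_left (aK N)).add_left ((Commute.refl (aK N)).pow_left 2)).smul_left _

lemma comm_ae1_aK : Commute (ae1 N) (aK N) :=
  ((Commute.one_left (aK N)).sub_left ((Commute.refl (aK N)).pow_left 2)).smul_left _

lemma aKsq_mul_aKsq : aK N ^ 2 * aK N ^ 2 = 1 := by
  rw [← pow_add]; exact aK_pow_four N

lemma ae0_add_ae1 : ae0 N + ae1 N = 1 := by
  rw [ae0, ae1, ← smul_add]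
  have : (1 + aK N ^ 2) + (1 - aK N ^ 2) = (2 : ℂ) • 1 := by
    rw [two_smul]; abel
  rw [this, smul_smul]
  norm_num

lemma ae0_mul_ae1 : ae0 N * ae1 N = 0 := by
  rw [ae0, ae1, smul_mul_smul_comm]
  have : (1 + aK N ^ 2) * (1 - aK N ^ 2) = 1 - aK N ^ 2 * aK N ^ 2 := by
    rw [add_mul, one_mul, mul_sub, mul_one]; abel
  rw [this, aKsq_mul_aKsq, sub_self, smul_zero]

lemma ae1_mul_ae0 : ae1 N * ae0 N = 0 := by
  rw [ae0, ae1, smul_mul_smul_comm]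
  have : (1 - aK N ^ 2) * (1 + aK N ^ 2) = 1 - aK N ^ 2 * aK N ^ 2 := by
    rw [sub_mul, one_mul, mul_add, mul_one]; abel
  rw [this, aKsq_mul_aKsq, sub_self, smul_zero]

lemma ae1_mul_ae1 : ae1 N * ae1 N = ae1 N := by
  have h := ae0_add_ae1 N
  have h2 : (ae0 N + ae1 N) * ae1 N = ae1 N := by rw [h, one_mul]
  rw [add_mul, ae0_mul_ae1, zero_add] at h2
  exact h2

lemma ae0_mul_ae0 : ae0 N * ae0 N = ae0 N := by
  have h2 : ae0 N * (ae0 N + ae1 N) = ae0 N := by rw [ae0_add_ae1, mul_one]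
  rw [mul_add, ae0_mul_ae1, add_zero] at h2
  exact h2

lemma aF_sq (j : Fin N) : aF N j * aF N j = ae1 N * aF N j := by
  unfold aF
  have hswap : af N j false * af N j true = ae1 N - af N j true * af N j false := by
    have h := af_mul_af N j j true false
    rw [if_pos ⟨rfl, by simp⟩] at h
    rw [eq_sub_iff_add_eq, add_comm]
    exact h
  have h1 : (af N j true * af N j false) * af N j false = 0 := by
    rw [mul_assoc, af_sq, mul_zero]
  calc af N j true * af N j false * (af N j true * af N j false)
      = af N j true * ((af N j false * af N j true) * af N j false) := by
        rw [mul_assoc, mul_assoc]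
    _ = af N j true * ((ae1 N - af N j true * af N j false) * af N j false) := by
        rw [hswap]
    _ = af N j true * (ae1 N * af N j false) := by
        rw [sub_mul, h1, sub_zero]
    _ = ae1 N * (af N j true * af N j false) := by
        rw [← mul_assoc, ← (comm_ae1_af N j true).eq, mul_assoc]

end SF
namespace SF

variable (N : ℕ)

lemma comm_ae0_ae1 : Commute (ae0 N) (ae1 N) := by
  unfold Commute SemiconjBy
  rw [ae0_mul_ae1, ae1_mul_ae0]

lemma commute_fermProd {x : QA N} {g : Fin N → QA N} (h : ∀ j, Commute x (g j)) :
    Commute x (fermProd N g) := by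
  apply Commute.list_prod_right
  intro y hy
  obtain ⟨j, _, rfl⟩ := List.mem_map.mp hy
  exact h j

lemma fermProd_one : fermProd N (fun _ => 1) = 1 := by
  simp [fermProd]

lemma fermProd_congr {g h : Fin N → QA N} (e : ∀ j, g j = h j) :
    fermProd N g = fermProd N h := by
  rw [show g = h from funext e]

lemma list_prod_mul {M : Type*} [Monoid M] {α : Type*} (l : List α) (g h : α → M)
    (hl : l.Nodup) (hc : ∀ a b, a ≠ b → Commute (h a) (g b)) :
    (l.map g).prod * (l.map h).prod = (l.map fun a => g a * h a).prod := by
  induction l with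
  | nil => simp
  | cons a t ih =>
    simp only [List.map_cons, List.prod_cons]
    have hnd := List.nodup_cons.mp hl
    have hcomm : Commute (h a) ((t.map g).prod) := by
      apply Commute.list_prod_right
      intro y hy
      obtain ⟨k, hk, rfl⟩ := List.mem_map.mp hy
      exact hc a k (fun e => hnd.1 (e ▸ hk))
    rw [mul_assoc, ← mul_assoc ((t.map g).prod), ← hcomm.eq, mul_assoc, ih hnd.2,
      ← mul_assoc]

lemma fermProd_mul (g h : Fin N → QA N)
    (hc : ∀ j k, j ≠ k → Commute (h j) (g k)) :
    fermProd N g * fermProd N h = fermProd N (fun j => g j * h j) :=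
  list_prod_mul _ _ _ (List.nodup_finRange N) hc

/-- The basic factor `1 + 2(x e₀ + y e₁) F_j`. -/
def Gc (x y : ℂ) (j : Fin N) : QA N :=
  1 + (2 : ℂ) • ((x • ae0 N + y • ae1 N) * aF N j)

lemma comm_E_aF (x y : ℂ) (j : Fin N) :
    Commute (x • ae0 N + y • ae1 N) (aF N j) :=
  ((comm_ae0_aF N j).smul_left x).add_left ((comm_ae1_aF N j).smul_left y)

lemma EF_mul (x y x' y' : ℂ) (j : Fin N) :
    ((x • ae0 N + y • ae1 N) * aF N j) * ((x' • ae0 N + y' • ae1 N) * aF N j)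
      = (y * y') • (ae1 N * aF N j) := by
  have h1 : aF N j * ((x' • ae0 N + y' • ae1 N) * aF N j)
      = (x' • ae0 N + y' • ae1 N) * (aF N j * aF N j) := by
    rw [← mul_assoc, ← (comm_E_aF N x' y' j).eq, mul_assoc]
  rw [mul_assoc, h1, aF_sq]
  have he : (x • ae0 N + y • ae1 N) * ((x' • ae0 N + y' • ae1 N) * ae1 N)
      = (y * y') • ae1 N := by
    simp only [add_mul, mul_add, smul_mul_assoc, mul_smul_comm, smul_smul,
      ae0_mul_ae1, ae1_mul_ae1, ae1_mul_ae0, ae0_mul_ae0, smul_zero, zero_add, add_zero]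
    rw [mul_comm y' y]
  rw [← mul_assoc (x' • ae0 N + y' • ae1 N), ← mul_assoc, he, smul_mul_assoc]

lemma Gc_mul (x y x' y' : ℂ) (j : Fin N) :
    Gc N x y j * Gc N x' y' j = Gc N (x + x') (y + y' + 2 * y * y') j := by
  have hk : ((2:ℂ) • ((x • ae0 N + y • ae1 N) * aF N j)) *
      ((2:ℂ) • ((x' • ae0 N + y' • ae1 N) * aF N j))
      = ((2:ℂ) * 2 * (y * y')) • (ae1 N * aF N j) := by
    rw [smul_mul_assoc, mul_smul_comm, smul_smul, EF_mul, smul_smul]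
  unfold Gc
  rw [add_mul, mul_add, mul_add, one_mul, mul_one, hk]
  simp only [add_mul, smul_mul_assoc, smul_add, smul_smul, one_mul]
  rw [add_assoc]
  congr 1
  module

lemma prefactor_mul (c d : ℂ) (p : ℕ) :
    (ae0 N + c • (aK N ^ p * ae1 N)) * (ae0 N + d • (aK N * ae1 N))
      = ae0 N + (c * d) • (aK N ^ (p + 1) * ae1 N) := by
  have h1 : ae0 N * (aK N * ae1 N) = 0 := by
    rw [← mul_assoc, (comm_ae0_aK N).eq, mul_assoc, ae0_mul_ae1, mul_zero]
  have h2 : (aK N ^ p * ae1 N) * ae0 N = 0 := by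
    rw [mul_assoc, ae1_mul_ae0, mul_zero]
  have h3 : (aK N ^ p * ae1 N) * (aK N * ae1 N) = aK N ^ (p + 1) * ae1 N := by
    rw [mul_assoc, ← mul_assoc (ae1 N), (comm_ae1_aK N).eq, mul_assoc, ae1_mul_ae1,
      ← mul_assoc, ← pow_succ]
  simp only [mul_add, add_mul, mul_smul_comm, smul_mul_assoc, smul_smul,
    ae0_mul_ae0, h1, h2, h3, smul_zero, add_zero, zero_add, mul_comm d c]

lemma comm_prefactor_Gc (c x y : ℂ) (j : Fin N) :
    Commute (ae0 N + c • (aK N * ae1 N)) (Gc N x y j) := by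
  have hP0 : Commute (ae0 N + c • (aK N * ae1 N)) (ae0 N) :=
    (Commute.refl _).add_left
      (((comm_ae0_aK N).symm.mul_left (comm_ae0_ae1 N).symm).smul_left c)
  have hP1 : Commute (ae0 N + c • (aK N * ae1 N)) (ae1 N) :=
    (comm_ae0_ae1 N).add_left
      (((comm_ae1_aK N).symm.mul_left (Commute.refl _)).smul_left c)
  have hPF : Commute (ae0 N + c • (aK N * ae1 N)) (aF N j) :=
    (comm_ae0_aF N j).add_left
      (((comm_aK_aF N j).mul_left (comm_ae1_aF N j)).smul_left c)
  unfold Gc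
  exact (Commute.one_right _).add_right
    ((((hP0.smul_right x).add_right (hP1.smul_right y)).mul_right hPF).smul_right 2)

lemma comm_Gc_Gc {j k : Fin N} (h : j ≠ k) (x y x' y' : ℂ) :
    Commute (Gc N x y j) (Gc N x' y' k) := by
  have hEE : Commute (x • ae0 N + y • ae1 N) (x' • ae0 N + y' • ae1 N) :=
    ((((Commute.refl (ae0 N)).smul_right x').add_right
        ((comm_ae0_ae1 N).smul_right y')).smul_left x).add_left
      ((((comm_ae0_ae1 N).symm.smul_right x').add_right
        ((Commute.refl (ae1 N)).smul_right y')).smul_left y)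
  have h1 : Commute ((x • ae0 N + y • ae1 N) * aF N j)
      ((x' • ae0 N + y' • ae1 N) * aF N k) :=
    (hEE.mul_left ((comm_E_aF N x' y' j).symm)).mul_right
      ((comm_E_aF N x y k).mul_left (comm_aF_aF N h))
  unfold Gc
  exact (Commute.one_right _).add_right
    (((Commute.one_left _).add_left ((h1.smul_left 2))).smul_right 2)

lemma deltaOdd_zero : deltaOdd 0 = 0 := by simp [deltaOdd]

lemma deltaOdd_succ (m : ℕ) : deltaOdd (m + 1) = 1 - deltaOdd m := by
  rcases Nat.even_or_odd m with h | h
  · simp [deltaOdd, Nat.even_add_one, Nat.odd_add_one, h, Nat.not_odd_iff_even.mpr h]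
  · simp [deltaOdd, Nat.odd_add_one, h, Nat.not_even_iff_odd.mpr h]

lemma key (c x : ℂ) (m : ℕ) :
    ((ae0 N + c • (aK N * ae1 N)) * fermProd N (Gc N x (-1))) ^ m
      = (ae0 N + c ^ m • (aK N ^ m * ae1 N)) *
          fermProd N (Gc N (x * m) (-(deltaOdd m))) := by
  induction m with
  | zero =>
      rw [pow_zero]
      have h0 : ∀ j, Gc N (x * (0 : ℕ)) (-(deltaOdd 0)) j = (fun _ => (1 : QA N)) j := by
        intro j
        simp [Gc, deltaOdd_zero]
      rw [fermProd_congr N h0, fermProd_one, mul_one, pow_zero, pow_zero, one_smul,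
        one_mul, ae0_add_ae1]
  | succ m ih =>
      rw [pow_succ, ih]
      have hcommA : Commute (ae0 N + c • (aK N * ae1 N))
          (fermProd N (Gc N (x * m) (-(deltaOdd m)))) :=
        commute_fermProd N fun j => comm_prefactor_Gc N c (x * m) (-(deltaOdd m)) j
      calc (ae0 N + c ^ m • (aK N ^ m * ae1 N)) * fermProd N (Gc N (x * m) (-(deltaOdd m)))
            * ((ae0 N + c • (aK N * ae1 N)) * fermProd N (Gc N x (-1)))
          = (ae0 N + c ^ m • (aK N ^ m * ae1 N)) * (ae0 N + c • (aK N * ae1 N)) *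
              (fermProd N (Gc N (x * m) (-(deltaOdd m))) * fermProd N (Gc N x (-1))) := by
            rw [mul_assoc, ← mul_assoc (fermProd N (Gc N (x * m) (-(deltaOdd m)))),
              ← hcommA.eq, mul_assoc, ← mul_assoc]
        _ = (ae0 N + c ^ (m + 1) • (aK N ^ (m + 1) * ae1 N)) *
              fermProd N (Gc N (x * (m + 1 : ℕ)) (-(deltaOdd (m + 1)))) := by
            rw [prefactor_mul, ← pow_succ,
              fermProd_mul N _ _ (fun j k hjk => comm_Gc_Gc N hjk _ _ _ _)]
            congr 1
            apply fermProd_congr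
            intro j
            rw [Gc_mul]
            congr 1
            · push_cast; ring
            · rw [deltaOdd_succ]; ring
end SF

open SF

/-- in the symplectic fermion quasi-Hopf algebra `Q(N, β)`
(with `β⁴ = (−1)^N`), the powers of the ribbon element and of its inverse
satisfy, for all natural `m ≥ 0`,
`v^{±m} = (e₀ + (−β^{±1} i K)^m e₁) · ∏_{j=1}^N (1 ∓ 2(m e₀ ± δ_{m odd} e₁) f_j⁺ f_j⁻)`. -/
theorem ribbon_power_formula (N : ℕ) (β : ℂ) (hβ : β ^ 4 = (-1 : ℂ) ^ N)
    (hβ0 : β ≠ 0) (m : ℕ) :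
    ribbon N β ^ m =
      (ae0 N + ((-(β * Complex.I)) ^ m) • (aK N ^ m * ae1 N)) *
        fermProd N (fun j =>
          1 - (2 : ℂ) • (((m : ℂ) • ae0 N + deltaOdd m • ae1 N) *
            (af N j true * af N j false)))
    ∧ ribbonInv N β ^ m =
      (ae0 N + ((-(β⁻¹ * Complex.I)) ^ m) • (aK N ^ m * ae1 N)) *
        fermProd N (fun j =>
          1 + (2 : ℂ) • (((m : ℂ) • ae0 N - deltaOdd m • ae1 N) *
            (af N j true * af N j false))) := by
  constructor
  · have hrib : ribbon N β
        = (ae0 N + (-(β * Complex.I)) • (aK N * ae1 N)) * fermProd N (Gc N (-1) (-1)) := by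
      unfold ribbon
      congr 1
      · module
      apply fermProd_congr
      intro j
      simp only [Gc, aF, add_mul, smul_mul_assoc]
      module
    rw [hrib, key]
    congr 1
    apply fermProd_congr
    intro j
    simp only [Gc, aF, add_mul, smul_mul_assoc]
    module
  · have hrib : ribbonInv N β
        = (ae0 N + (-(β⁻¹ * Complex.I)) • (aK N * ae1 N)) * fermProd N (Gc N 1 (-1)) := by
      unfold ribbonInv
      congr 1
      · module
      apply fermProd_congr
      intro j
      simp only [Gc, aF, add_mul, smul_mul_assoc, sub_mul]
      module
    rw [hrib, key]
    congr 1
    apply fermProd_congr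
    intro j
    simp only [Gc, aF, add_mul, smul_mul_assoc, sub_mul]
    module
end
end

section
/- Let H = Q(2, β) be the symplectic fermion quasi-Hopf algebra with N = 2, and let A ⊂ H be the quasi-Hopf subalgebra generated by K, f_1^+, f_1^-. Let P_0(A) be the 4-dimensional projective cover of the trivial A-module, with basis v_0, v_1^- = f_1^-.v_0, v_1^+ = f_1^+.v_0, v_2 = f_1^+ f_1^-.v_0. For every 2×2 complex matrix μ = (a^-, a^+; b^-, b^+), defining the action of f_2^ε on P_0(A) by f_2^ε = a^ε f_1^- + b^ε f_1^+ (ε = ±) yields an H-module P_μ lifting P_0(A); every lift of P_0(A) to an H-module arises this way; and P_μ ≅ P_{μ'} as H-modules if and only if μ = μ'. -/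
noncomputable section

/-- The data of a module over the quasi-Hopf subalgebra `A ⊂ H = Q(2,β)`
generated by `K, f₁⁺, f₁⁻`: a complex vector space `V` together with operators
`Kop, fp, fm` (the actions of `K, f₁⁺, f₁⁻`) satisfying the defining relations
`K⁴ = 1`, `{f₁^±, K} = 0`, `{f₁^±, f₁^±} = 0`, `{f₁⁺, f₁⁻} = e₁ = (1−K²)/2`. -/
structure SFOps (V : Type) [AddCommGroup V] [Module ℂ V] where
  Kop : Module.End ℂ V
  fp : Module.End ℂ V
  fm : Module.End ℂ V
  K_four : Kop ^ 4 = 1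
  anticomm_Kfp : fp * Kop + Kop * fp = 0
  anticomm_Kfm : fm * Kop + Kop * fm = 0
  anticomm_fpfp : fp * fp + fp * fp = 0
  anticomm_fmfm : fm * fm + fm * fm = 0
  anticomm_fpfm : fp * fm + fm * fp = (2 : ℂ)⁻¹ • (1 - Kop ^ 2)

namespace SFOps

variable {V : Type} [AddCommGroup V] [Module ℂ V]

/-- The operator `f₁^δ` (`δ : Bool`, `true = +`). -/
def f1 (O : SFOps V) (δ : Bool) : Module.End ℂ V := if δ then O.fp else O.fm

/-- A lift of the `A`-module `V` to a module over `H = Q(2,β)`: a pair of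
additional operators `g ε` (the actions of `f₂^ε`) satisfying the remaining
defining relations of `H`:
`{f₂^ε, K} = 0`, `{f₂^ε, f₁^δ} = 0`, `{f₂^ε, f₂^δ} = δ_{ε≠δ} e₁`. -/
structure IsLift (O : SFOps V) (g : Bool → Module.End ℂ V) : Prop where
  anticomm_K : ∀ ε, g ε * O.Kop + O.Kop * g ε = 0
  anticomm_f1 : ∀ ε δ, g ε * O.f1 δ + O.f1 δ * g ε = 0
  anticomm_g : ∀ ε δ, g ε * g δ + g δ * g ε =
    if ε ≠ δ then (2 : ℂ)⁻¹ • (1 - O.Kop ^ 2) else 0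

/-- The lifted action of `f₂^ε` determined by a 2×2 complex matrix
`μ = (a⁻ a⁺; b⁻ b⁺)`, namely `f₂^ε = a^ε f₁⁻ + b^ε f₁⁺`.
The resulting `H`-module is `P_μ`. -/
def liftOps (O : SFOps V) (a b : Bool → ℂ) : Bool → Module.End ℂ V :=
  fun ε => a ε • O.fm + b ε • O.fp

end SFOps

open SFOps

/-! `K` fixes `v₀` and anticommutes with `f₁^±`, so the basis `v₀, f₁⁻v₀, f₁⁺v₀, f₁⁺f₁⁻v₀`
consists of `K`-eigenvectors with eigenvalues `1, -1, -1, 1`; hence `K² = 1` and `e₁ = 0`, and the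
relations of `f₂^ε` become plain anticommutation relations that every `a f₁⁻ + b f₁⁺` satisfies.
Conversely, `f₂^ε v₀` lies in the `(-1)`-eigenspace `span {f₁⁻v₀, f₁⁺v₀}`, and an operator
anticommuting with `f₁^±` is determined by its value on the cyclic vector `v₀`.
An isomorphism `φ` commutes with `f₁^±`, hence with every `a' f₁⁻ + b' f₁⁺`, so intertwining
`f₂^ε` with `f₂'^ε` forces `f₂^ε v₀ = f₂'^ε v₀`, i.e. `μ = μ'`. -/

section Anticommute

variable {R M : Type*} [Ring R] [AddCommGroup M] [Module R M]

theorem Module.End.apply_apply_eq_neg_of_anticomm {S T : Module.End R M}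
    (h : S * T + T * S = 0) (v : M) : S (T v) = -T (S v) :=
  eq_neg_of_add_eq_zero_left (LinearMap.congr_fun h v)

theorem Module.End.apply_eq_neg_smul_of_anticomm {S T : Module.End R M}
    (h : S * T + T * S = 0) {v : M} {c : R} (hv : T v = c • v) :
    T (S v) = -c • S v := by
  rw [Module.End.apply_apply_eq_neg_of_anticomm ((add_comm _ _).trans h), hv, map_smul,
    neg_smul]

theorem eq_zero_of_add_self_eq_zero {W : Type*} [AddCommGroup W] [Module ℂ W] {x : W}
    (h : x + x = 0) : x = 0 :=
  (smul_eq_zero.mp (by rwa [two_smul] : (2 : ℂ) • x = 0)).resolve_left two_ne_zero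

end Anticommute

namespace SFOps

open Module.End

variable {V : Type} [AddCommGroup V] [Module ℂ V] (O : SFOps V)

@[simp] theorem f1_true : O.f1 true = O.fp := rfl

@[simp] theorem f1_false : O.f1 false = O.fm := rfl

theorem fp_mul_fp : O.fp * O.fp = 0 := eq_zero_of_add_self_eq_zero O.anticomm_fpfp

theorem fm_mul_fm : O.fm * O.fm = 0 := eq_zero_of_add_self_eq_zero O.anticomm_fmfm

theorem fm_mul_fp (hK : O.Kop ^ 2 = 1) : O.fm * O.fp = -(O.fp * O.fm) := by
  refine eq_neg_of_add_eq_zero_right ?_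
  rw [O.anticomm_fpfm, hK, sub_self, smul_zero]

theorem isLift_liftOps (hK : O.Kop ^ 2 = 1) (a b : Bool → ℂ) : IsLift O (liftOps O a b) := by
  have hKm : O.fm * O.Kop = -(O.Kop * O.fm) := eq_neg_of_add_eq_zero_left O.anticomm_Kfm
  have hKp : O.fp * O.Kop = -(O.Kop * O.fp) := eq_neg_of_add_eq_zero_left O.anticomm_Kfp
  refine ⟨fun ε => ?_, fun ε δ => ?_, fun ε δ => ?_⟩
  · simp only [liftOps, add_mul, mul_add, smul_mul_assoc, mul_smul_comm, hKm, hKp]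
    module
  · cases δ <;>
      simp only [liftOps, f1_true, f1_false, add_mul, mul_add, smul_mul_assoc, mul_smul_comm,
        fm_mul_fm, fp_mul_fp, O.fm_mul_fp hK] <;>
      module
  · rw [hK, sub_self, smul_zero, ite_self]
    simp only [liftOps, add_mul, mul_add, smul_mul_assoc, mul_smul_comm, fm_mul_fm, fp_mul_fp,
      O.fm_mul_fp hK]
    module

@[simp] theorem liftOps_apply (a b : Bool → ℂ) (ε : Bool) (x : V) :
    liftOps O a b ε x = a ε • O.fm x + b ε • O.fp x := rfl

variable {O}

theorem eq_and_eq_of_linearEquiv_intertwines_liftOps {v0 : V}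
    (hind : LinearIndependent ℂ ![O.fm v0, O.fp v0]) (φ : V ≃ₗ[ℂ] V)
    (hφp : ∀ x, φ (O.fp x) = O.fp (φ x)) (hφm : ∀ x, φ (O.fm x) = O.fm (φ x))
    {a b a' b' : Bool → ℂ} (hφ : ∀ ε x, φ (liftOps O a b ε x) = liftOps O a' b' ε (φ x)) :
    a = a' ∧ b = b' := by
  have hφ' : ∀ ε x, φ (liftOps O a' b' ε x) = liftOps O a' b' ε (φ x) := by
    simp [hφp, hφm]
  have hv0 : ∀ ε, liftOps O a b ε v0 = liftOps O a' b' ε v0 :=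
    fun ε => φ.injective ((hφ ε v0).trans (hφ' ε v0).symm)
  have hcoeff : ∀ ε, a ε = a' ε ∧ b ε = b' ε :=
    fun ε => hind.eq_of_pair (by simpa using hv0 ε)
  exact ⟨funext fun ε => (hcoeff ε).1, funext fun ε => (hcoeff ε).2⟩

variable {v0 : V} (hKv0 : O.Kop v0 = v0)
include hKv0

theorem Kop_fm_apply : O.Kop (O.fm v0) = -O.fm v0 := by
  simpa using apply_eq_neg_smul_of_anticomm O.anticomm_Kfm (c := 1) (by rwa [one_smul])

theorem Kop_fp_apply : O.Kop (O.fp v0) = -O.fp v0 := by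
  simpa using apply_eq_neg_smul_of_anticomm O.anticomm_Kfp (c := 1) (by rwa [one_smul])

theorem Kop_fp_fm_apply : O.Kop (O.fp (O.fm v0)) = O.fp (O.fm v0) := by
  simpa using apply_eq_neg_smul_of_anticomm O.anticomm_Kfp (c := -1)
    (by rw [Kop_fm_apply hKv0, neg_one_smul])

variable (hspan : Submodule.span ℂ (Set.range ![v0, O.fm v0, O.fp v0, (O.fp * O.fm) v0]) = ⊤)
include hspan

theorem Kop_sq_eq_one : O.Kop ^ 2 = 1 := by
  refine LinearMap.ext_on hspan ?_
  rintro _ ⟨i, rfl⟩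
  fin_cases i <;>
    simp [pow_two, hKv0, Kop_fm_apply hKv0, Kop_fp_apply hKv0, Kop_fp_fm_apply hKv0]

theorem exists_eq_smul_fm_add_smul_fp {u : V} (hu : O.Kop u = -u) :
    ∃ s t : ℂ, u = s • O.fm v0 + t • O.fp v0 := by
  obtain ⟨c, hc⟩ :=
    (Submodule.mem_span_range_iff_exists_fun ℂ).mp (hspan ▸ Submodule.mem_top (x := u))
  simp only [Fin.sum_univ_four, Matrix.cons_val, Module.End.mul_apply] at hc
  have hKc := congrArg O.Kop hc
  simp only [map_add, map_smul, hKv0, Kop_fm_apply hKv0, Kop_fp_apply hKv0,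
    Kop_fp_fm_apply hKv0, hu] at hKc
  refine ⟨c 1, c 2, ?_⟩
  -- `u = (u - K u) / 2`, and `1 - K` kills `v₀` and `f₁⁺f₁⁻v₀`.
  linear_combination (norm := module) (-2⁻¹ : ℂ) • (hc - hKc)

omit hKv0 in
theorem eq_of_anticomm_f1_of_apply_eq {g l : Module.End ℂ V}
    (hg : ∀ δ, g * O.f1 δ + O.f1 δ * g = 0) (hl : ∀ δ, l * O.f1 δ + O.f1 δ * l = 0)
    (h0 : g v0 = l v0) : g = l := by
  have hgm := apply_apply_eq_neg_of_anticomm (hg false)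
  have hgp := apply_apply_eq_neg_of_anticomm (hg true)
  have hlm := apply_apply_eq_neg_of_anticomm (hl false)
  have hlp := apply_apply_eq_neg_of_anticomm (hl true)
  simp only [f1_true, f1_false] at hgm hgp hlm hlp
  refine LinearMap.ext_on hspan ?_
  rintro _ ⟨i, rfl⟩
  fin_cases i <;> simp [hgm, hgp, hlm, hlp, h0]

theorem IsLift.exists_eq_liftOps {g : Bool → Module.End ℂ V} (hg : IsLift O g) :
    ∃ a b : Bool → ℂ, g = liftOps O a b := by
  have hKg : ∀ ε, O.Kop (g ε v0) = -g ε v0 := fun ε => by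
    simpa using apply_eq_neg_smul_of_anticomm (hg.anticomm_K ε) (c := 1) (by rwa [one_smul])
  choose a b hab using fun ε => exists_eq_smul_fm_add_smul_fp hKv0 hspan (hKg ε)
  have hlift := isLift_liftOps O (Kop_sq_eq_one hKv0 hspan) a b
  refine ⟨a, b, funext fun ε => ?_⟩
  exact eq_of_anticomm_f1_of_apply_eq hspan (hg.anticomm_f1 ε) (hlift.anticomm_f1 ε)
    (by simpa using hab ε)

end SFOps

theorem lifts_of_projective_cover_classified_general
    (V : Type) [AddCommGroup V] [Module ℂ V] (O : SFOps V)
    (v0 : V) (hKv0 : O.Kop v0 = v0)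
    (hLI : LinearIndependent ℂ ![v0, O.fm v0, O.fp v0, (O.fp * O.fm) v0])
    (hspan : Submodule.span ℂ (Set.range ![v0, O.fm v0, O.fp v0, (O.fp * O.fm) v0]) = ⊤) :
    (∀ a b : Bool → ℂ, IsLift O (liftOps O a b))
    ∧ (∀ g : Bool → Module.End ℂ V, IsLift O g → ∃ a b : Bool → ℂ, g = liftOps O a b)
    ∧ (∀ a b a' b' : Bool → ℂ,
        (∃ φ : V ≃ₗ[ℂ] V,
          (∀ x : V, φ (O.Kop x) = O.Kop (φ x)) ∧
          (∀ x : V, φ (O.fp x) = O.fp (φ x)) ∧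
          (∀ x : V, φ (O.fm x) = O.fm (φ x)) ∧
          (∀ (ε : Bool) (x : V), φ (liftOps O a b ε x) = liftOps O a' b' ε (φ x)))
        ↔ (a = a' ∧ b = b')) := by
  have hind : LinearIndependent ℂ ![O.fm v0, O.fp v0] := by
    convert hLI.comp ![1, 2] (by decide) using 1
    ext i
    fin_cases i <;> rfl
  refine ⟨isLift_liftOps O (Kop_sq_eq_one hKv0 hspan),
    fun g hg => hg.exists_eq_liftOps hKv0 hspan, fun a b a' b' => ⟨?_, ?_⟩⟩
  · rintro ⟨φ, -, hφp, hφm, hφ⟩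
    exact eq_and_eq_of_linearEquiv_intertwines_liftOps hind φ hφp hφm hφ
  · rintro ⟨rfl, rfl⟩
    exact ⟨LinearEquiv.refl ℂ V, fun _ => rfl, fun _ => rfl, fun _ => rfl, fun _ _ => rfl⟩

/-- let `A ⊂ H = Q(2,β)` be the quasi-Hopf subalgebra generated
by `K, f₁⁺, f₁⁻` and let `V = P₀(A)` be the 4-dimensional projective cover of
the trivial `A`-module, with basis `v₀, f₁⁻v₀, f₁⁺v₀, f₁⁺f₁⁻v₀` and `K v₀ = v₀`.
Then: (1) for every `μ = (a⁻ a⁺; b⁻ b⁺) ∈ Mat₂(ℂ)`, setting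
`f₂^ε = a^ε f₁⁻ + b^ε f₁⁺` defines a lift `P_μ` of `P₀(A)` to an `H`-module;
(2) every lift of `P₀(A)` to an `H`-module arises this way; and
(3) `P_μ ≅ P_{μ'}` as `H`-modules if and only if `μ = μ'`. -/
theorem lifts_of_projective_cover_classified
    (β : ℂ) (hβ : β ^ 4 = (-1 : ℂ) ^ 2)
    (V : Type) [AddCommGroup V] [Module ℂ V] (O : SFOps V)
    (v0 : V) (hKv0 : O.Kop v0 = v0)
    (hLI : LinearIndependent ℂ ![v0, O.fm v0, O.fp v0, (O.fp * O.fm) v0])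
    (hspan : Submodule.span ℂ (Set.range ![v0, O.fm v0, O.fp v0, (O.fp * O.fm) v0]) = ⊤) :
    (∀ a b : Bool → ℂ, IsLift O (liftOps O a b))
    ∧ (∀ g : Bool → Module.End ℂ V, IsLift O g → ∃ a b : Bool → ℂ, g = liftOps O a b)
    ∧ (∀ a b a' b' : Bool → ℂ,
        (∃ φ : V ≃ₗ[ℂ] V,
          (∀ x : V, φ (O.Kop x) = O.Kop (φ x)) ∧
          (∀ x : V, φ (O.fp x) = O.fp (φ x)) ∧
          (∀ x : V, φ (O.fm x) = O.fm (φ x)) ∧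
          (∀ (ε : Bool) (x : V), φ (liftOps O a b ε x) = liftOps O a' b' ε (φ x)))
        ↔ (a = a' ∧ b = b')) :=
  lifts_of_projective_cover_classified_general V O v0 hKv0 hLI hspan
end
end
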